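/- Let 𝔽 be a field and let S_3 = {{1,2,4},{1,2,6},{1,3,4},{1,3,5},{1,5,6},{2,3,5},{2,3,6},{2,4,5},{3,4,6},{4,5,6}} ⊆ C([6],3). Then no 2-subset of [6] is simplicial in the 3-hyperclique complex ⟨S_3⟩, and consequently ⟨S_3⟩ is not D-perfect. -/

import Mathlib

/-!
Common definitions for simplicial matroids, following Cordovil–Lemos–Linhares Sales,
"Dirac's theorem on simplicial matroids".

We model `[n] = {1,…,n}` by `Fin n`, and a subset of `[n]` by a `Finset (Fin n)`.
A family `S_k ⊆ C([n],k)` is a `Finset (Finset (Fin n))` (all of whose members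
have cardinality `k`, which is imposed by hypotheses in the theorems).
-/

open Finset

/-- The incidence number `[F' : F]`: if `F = i₁ < i₂ < ⋯ < iₘ` and `F' = F \ {iⱼ}`
then `[F' : F] = (-1)ʲ` (with `j` the 1-based position of the deleted element),
and `[F' : F] = 0` otherwise. -/
def inc {n : ℕ} (F' F : Finset (Fin n)) : ℤ :=
  ∑ i ∈ F, if F' = F.erase i then (-1 : ℤ) ^ (F.filter (fun j => j ≤ i)).card else 0

/-- The family `C([n], m)` of `m`-element subsets of `[n]`, as a type. -/
abbrev Csets (n m : ℕ) := {F : Finset (Fin n) // F.card = m}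

/-- `∂_k F`, the boundary of a single `k`-subset `F` of `[n]`,
as a vector of `𝔽^{C([n],k-1)}`. -/
def bvec (𝔽 : Type*) [Field 𝔽] (n k : ℕ) (F : Finset (Fin n)) : Csets n (k - 1) → 𝔽 :=
  fun F' => ((inc F'.1 F : ℤ) : 𝔽)

/-- Independence in the simplicial matroid `Sim_k^n(S_k)` over `𝔽`:
`X ⊆ S_k` is independent iff the vectors `∂_k F`, `F ∈ X`, are linearly independent. -/
def SimIndep (𝔽 : Type*) [Field 𝔽] (n k : ℕ) (Sk X : Finset (Finset (Fin n))) : Prop :=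
  X ⊆ Sk ∧ LinearIndependent 𝔽 (fun F : X => bvec 𝔽 n k F.1)

/-- A circuit of `Sim_k^n(S_k)`: a minimal dependent subset of the ground set. -/
def SimCircuit (𝔽 : Type*) [Field 𝔽] (n k : ℕ) (Sk C : Finset (Finset (Fin n))) : Prop :=
  C ⊆ Sk ∧ ¬ LinearIndependent 𝔽 (fun F : C => bvec 𝔽 n k F.1) ∧
    ∀ C' ⊂ C, LinearIndependent 𝔽 (fun F : C' => bvec 𝔽 n k F.1)

/-- The rank (in `Sim_k^n`) of a set `X` of `k`-subsets of `[n]`: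
the dimension of the span of the boundaries of its members. -/
noncomputable def simRank (𝔽 : Type*) [Field 𝔽] (n k : ℕ) (X : Finset (Finset (Fin n))) : ℕ :=
  Module.finrank 𝔽 (Submodule.span 𝔽 ((fun F => bvec 𝔽 n k F) '' (X : Set (Finset (Fin n)))))

/-- A cocircuit of `Sim_k^n(S_k)`, i.e. a circuit of the dual matroid:
a minimal set `C ⊆ S_k` whose complement does not span (`X` is independent in the dual
matroid iff `r(E ∖ X) = r(E)`). -/
def SimCocircuit (𝔽 : Type*) [Field 𝔽] (n k : ℕ) (Sk C : Finset (Finset (Fin n))) : Prop :=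
  C ⊆ Sk ∧ simRank 𝔽 n k (Sk \ C) < simRank 𝔽 n k Sk ∧
    ∀ C' ⊂ C, simRank 𝔽 n k (Sk \ C') = simRank 𝔽 n k Sk

/-- The boundary map `∂_k : 𝔽^{S_k} → 𝔽^{C([n],k-1)}`. -/
noncomputable def bdryMap (𝔽 : Type*) [Field 𝔽] (n k : ℕ) (Sk : Finset (Finset (Fin n))) :
    (↥Sk → 𝔽) →ₗ[𝔽] (Csets n (k - 1) → 𝔽) :=
  Matrix.mulVecLin (Matrix.of fun (F' : Csets n (k - 1)) (F : ↥Sk) => ((inc F'.1 F.1 : ℤ) : 𝔽))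

/-- The coboundary `δ^{k-1} V` of a `(k-1)`-subset `V` of `[n]`,
as a vector of `𝔽^{S_k}`; its `F`-coordinate is `[V : F]`. -/
def cobdry (𝔽 : Type*) [Field 𝔽] {n : ℕ} (Sk : Finset (Finset (Fin n)))
    (V : Finset (Fin n)) : ↥Sk → 𝔽 :=
  fun F => ((inc V F.1 : ℤ) : 𝔽)

/-- The boundary `∂_{k+1} X` of a `(k+1)`-subset `X` of `[n]`, regarded as a vector
of `𝔽^{S_k}`; its `F`-coordinate is `[F : X]`. -/
def pbdry (𝔽 : Type*) [Field 𝔽] {n : ℕ} (Sk : Finset (Finset (Fin n)))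
    (X : Finset (Fin n)) : ↥Sk → 𝔽 :=
  fun F => ((inc F.1 X : ℤ) : 𝔽)

open scoped Classical in
/-- The support of a vector of `𝔽^{S_k}`, as a set of `k`-subsets of `[n]`. -/
noncomputable def suppFin {𝔽 : Type*} [Field 𝔽] {n : ℕ} {Sk : Finset (Finset (Fin n))}
    (v : ↥Sk → 𝔽) : Finset (Finset (Fin n)) :=
  (Sk.attach.filter fun F => v F ≠ 0).image Subtype.val

/-- `supp(δ^{k-1} V) ⊆ S_k`. -/
noncomputable def suppδ (𝔽 : Type*) [Field 𝔽] {n : ℕ} (Sk : Finset (Finset (Fin n)))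
    (V : Finset (Fin n)) : Finset (Finset (Fin n)) :=
  suppFin (cobdry 𝔽 Sk V)

/-- The cocircuit space of `Sim_k^n(S_k)`: the orthogonal complement, with respect to the
standard bilinear form on `𝔽^{S_k}`, of the circuit space `ker ∂_k`. -/
noncomputable def cocircSpace (𝔽 : Type*) [Field 𝔽] (n k : ℕ) (Sk : Finset (Finset (Fin n))) :
    Submodule 𝔽 (↥Sk → 𝔽) where
  carrier := {w | ∀ v ∈ LinearMap.ker (bdryMap 𝔽 n k Sk), ∑ F, v F * w F = 0}
  zero_mem' := by intro v hv; simp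
  add_mem' := by
    intro a b ha hb v hv
    have h1 := ha v hv
    have h2 := hb v hv
    simp only [Pi.add_apply, mul_add, Finset.sum_add_distrib]
    rw [h1, h2, add_zero]
  smul_mem' := by
    intro c w hw v hv
    have h := hw v hv
    simp only [Pi.smul_apply, smul_eq_mul]
    calc ∑ F, v F * (c * w F) = ∑ F, c * (v F * w F) := by
          exact Finset.sum_congr rfl fun F _ => by ring
      _ = c * ∑ F, v F * w F := (Finset.mul_sum _ _ _).symm
      _ = 0 := by rw [h, mul_zero]

/-- The faces of the `k`-hyperclique complex `⟨S_k⟩`: all `F ⊆ [n]` with `|F| < k`,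
together with all `F` every `k`-element subset of which lies in `S_k`. -/
def IsFace {n : ℕ} (k : ℕ) (Sk : Finset (Finset (Fin n))) (F : Finset (Fin n)) : Prop :=
  F.card < k ∨ ∀ G ⊆ F, G.card = k → G ∈ Sk

/-- A facet of `⟨S_k⟩`: an inclusion-maximal face. -/
def IsFacet {n : ℕ} (k : ℕ) (Sk : Finset (Finset (Fin n))) (F : Finset (Fin n)) : Prop :=
  IsFace k Sk F ∧ ∀ G, IsFace k Sk G → F ⊆ G → F = G

/-- `V` is simplicial in `⟨S_k⟩` if there is exactly one facet `X` of `⟨S_k⟩`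
with `V ⊊ X`. -/
def SimplicialFace {n : ℕ} (k : ℕ) (Sk : Finset (Finset (Fin n))) (V : Finset (Fin n)) : Prop :=
  ∃! X, IsFacet k Sk X ∧ V ⊂ X

/-- The `k`-skeleta of the complexes `Δ_0 = ⟨S_k⟩`, `Δ_{j+1} = Δ_j ∖∖ V_j`, where
`Δ ∖∖ V = ⟨(skeleton of Δ) ∖ supp(δ^{k-1} V)⟩` (0-indexed). -/
noncomputable def delSeq (𝔽 : Type*) [Field 𝔽] {n : ℕ} (Sk : Finset (Finset (Fin n)))
    (V : ℕ → Finset (Fin n)) : ℕ → Finset (Finset (Fin n))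
  | 0 => Sk
  | j + 1 => delSeq 𝔽 Sk V j \ suppδ 𝔽 (delSeq 𝔽 Sk V j) (V j)

/-- `C*_j := supp(δ^{k-1} V_j) ∖ ⋃_{i<j} supp(δ^{k-1} V_i)` (0-indexed). -/
noncomputable def Cstar (𝔽 : Type*) [Field 𝔽] {n : ℕ} (Sk : Finset (Finset (Fin n)))
    (V : ℕ → Finset (Fin n)) (j : ℕ) : Finset (Finset (Fin n)) :=
  suppδ 𝔽 Sk (V j) \ (Finset.range j).biUnion (fun i => suppδ 𝔽 Sk (V i))

/-- `(V_1,…,V_r)` (0-indexed: `V 0, …, V (r-1)`) is a basic linear sequence for `⟨S_k⟩`,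
where `r` is the rank of `Sim_k^n(S_k)`: each `V_j` is a `(k-1)`-subset of `[n]` and each
`C*_j` is a cocircuit of `Sim_k^n(S_k(Δ_{j-1}))`. -/
def BasicLinearSeq (𝔽 : Type*) [Field 𝔽] (n k : ℕ) (Sk : Finset (Finset (Fin n))) (r : ℕ)
    (V : ℕ → Finset (Fin n)) : Prop :=
  simRank 𝔽 n k Sk = r ∧ (∀ j < r, (V j).card = k - 1) ∧
    ∀ j < r, SimCocircuit 𝔽 n k (delSeq 𝔽 Sk V j) (Cstar 𝔽 Sk V j)

/-- `⟨S_k⟩` is D-perfect: there is a basic linear sequence `V_1,…,V_r` such that each `V_j`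
is simplicial in `Δ_{j-1}`. -/
def DPerfect (𝔽 : Type*) [Field 𝔽] (n k : ℕ) (Sk : Finset (Finset (Fin n))) : Prop :=
  ∃ V : ℕ → Finset (Fin n),
    BasicLinearSeq 𝔽 n k Sk (simRank 𝔽 n k Sk) V ∧
      ∀ j < simRank 𝔽 n k Sk, SimplicialFace k (delSeq 𝔽 Sk V j) (V j)

/-- A flat of `Sim_k^n(S_k)`: a closed subset of the ground set. -/
def SimFlat (𝔽 : Type*) [Field 𝔽] (n k : ℕ) (Sk X : Finset (Finset (Fin n))) : Prop :=
  X ⊆ Sk ∧ ∀ F ∈ Sk,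
    bvec 𝔽 n k F ∈ Submodule.span 𝔽 ((fun G => bvec 𝔽 n k G) '' (X : Set (Finset (Fin n)))) →
      F ∈ X

/-- A hyperplane of `Sim_k^n(S_k)`: a flat of rank one less than the rank of the matroid. -/
def SimHyperplane (𝔽 : Type*) [Field 𝔽] (n k : ℕ) (Sk H : Finset (Finset (Fin n))) : Prop :=
  SimFlat 𝔽 n k Sk H ∧ simRank 𝔽 n k H + 1 = simRank 𝔽 n k Sk

/-- A modular flat of `Sim_k^n(S_k)`:
`r(X) + r(Y) = r(X ∪ Y) + r(X ∩ Y)` for every flat `Y`. -/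
def ModularFlat (𝔽 : Type*) [Field 𝔽] (n k : ℕ) (Sk X : Finset (Finset (Fin n))) : Prop :=
  SimFlat 𝔽 n k Sk X ∧ ∀ Y, SimFlat 𝔽 n k Sk Y →
    simRank 𝔽 n k X + simRank 𝔽 n k Y = simRank 𝔽 n k (X ∪ Y) + simRank 𝔽 n k (X ∩ Y)

open scoped Classical in
/-- The closure of `X` in `Sim_k^n(S_k)`. -/
noncomputable def simClosure (𝔽 : Type*) [Field 𝔽] (n k : ℕ)
    (Sk X : Finset (Finset (Fin n))) : Finset (Finset (Fin n)) :=
  Sk.filter fun F =>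
    bvec 𝔽 n k F ∈ Submodule.span 𝔽 ((fun G => bvec 𝔽 n k G) '' (X : Set (Finset (Fin n))))

/-- `Sim_k^n(S_k)` is supersolvable: it admits a maximal chain of modular flats
`cl(∅) = X_0 ⊊ X_1 ⊊ ⋯ ⊊ X_r = S_k`, `r` the rank. -/
def Supersolvable (𝔽 : Type*) [Field 𝔽] (n k : ℕ) (Sk : Finset (Finset (Fin n))) : Prop :=
  ∃ X : ℕ → Finset (Finset (Fin n)),
    X 0 = simClosure 𝔽 n k Sk ∅ ∧ X (simRank 𝔽 n k Sk) = Sk ∧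
      (∀ i < simRank 𝔽 n k Sk, X i ⊂ X (i + 1)) ∧
      ∀ i ≤ simRank 𝔽 n k Sk, ModularFlat 𝔽 n k Sk (X i)

/-- `H` is a dense hyperplane of `Sim_k^n(ground)`: a hyperplane of the form
`ground ∖ supp(δ^{k-1} V)` for some `(k-1)`-subset `V` simplicial in `⟨ground⟩`. -/
def DenseHyp (𝔽 : Type*) [Field 𝔽] (n k : ℕ) (ground H : Finset (Finset (Fin n))) : Prop :=
  SimHyperplane 𝔽 n k ground H ∧
    ∃ V : Finset (Fin n), V.card = k - 1 ∧ SimplicialFace k ground V ∧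
      H = ground \ suppδ 𝔽 ground V

/-- `Sim_k^n(S_k)` is superdense: there is a chain `∅ = X_0 ⊊ X_1 ⊊ ⋯ ⊊ X_r = S_k` of flats
(`r` the rank) with each `X_i` a dense hyperplane of `Sim_k^n(X_{i+1})`. -/
def Superdense (𝔽 : Type*) [Field 𝔽] (n k : ℕ) (Sk : Finset (Finset (Fin n))) : Prop :=
  ∃ X : ℕ → Finset (Finset (Fin n)),
    X 0 = ∅ ∧ X (simRank 𝔽 n k Sk) = Sk ∧
      (∀ i ≤ simRank 𝔽 n k Sk, SimFlat 𝔽 n k Sk (X i)) ∧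
      (∀ i < simRank 𝔽 n k Sk, X i ⊂ X (i + 1)) ∧
      ∀ i < simRank 𝔽 n k Sk, DenseHyp 𝔽 n k (X (i + 1)) (X i)

/-- `Sim_k^n(S_k)` is triangulable over `𝔽`: the boundaries of the `(k+1)`-faces of `⟨S_k⟩`
span the circuit space `ker ∂_k`. -/
def Triangulable (𝔽 : Type*) [Field 𝔽] (n k : ℕ) (Sk : Finset (Finset (Fin n))) : Prop :=
  Submodule.span 𝔽
      {v : ↥Sk → 𝔽 | ∃ X : Finset (Fin n), X.card = k + 1 ∧ IsFace k Sk X ∧ v = pbdry 𝔽 Sk X}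
    = LinearMap.ker (bdryMap 𝔽 n k Sk)

/-- `Sim_k^n(S_k)` is strongly triangulable over `𝔽`: there are `(k+1)`-faces `X_1,…,X_{m'}`
of `⟨S_k⟩` whose boundaries span `ker ∂_k` and such that every circuit `C` has a
representing vector `C⃗` with support `C` which is a combination, with nonzero coefficients,
of boundaries `∂_{k+1} X_{i_j}` with `⋃_{F ∈ C} F = ⋃_j X_{i_j}`. -/
def StronglyTriangulable (𝔽 : Type*) [Field 𝔽] (n k : ℕ)
    (Sk : Finset (Finset (Fin n))) : Prop :=
  ∃ (m' : ℕ) (Xs : Fin m' → Finset (Fin n)),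
    (∀ i, (Xs i).card = k + 1 ∧ IsFace k Sk (Xs i)) ∧
    Submodule.span 𝔽 (Set.range fun i => pbdry 𝔽 Sk (Xs i)) = LinearMap.ker (bdryMap 𝔽 n k Sk) ∧
    ∀ C, SimCircuit 𝔽 n k Sk C →
      ∃ (s : ℕ) (idx : Fin s → Fin m') (a : Fin s → 𝔽) (Cv : ↥Sk → 𝔽),
        (∀ j, a j ≠ 0) ∧ suppFin Cv = C ∧
        Cv = ∑ j, a j • pbdry 𝔽 Sk (Xs (idx j)) ∧
        C.biUnion id = Finset.univ.biUnion fun j : Fin s => Xs (idx j)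

/-- The simple graph `([n], S_2)`. -/
def graphOf {n : ℕ} (S2 : Finset (Finset (Fin n))) : SimpleGraph (Fin n) where
  Adj u v := u ≠ v ∧ ({u, v} : Finset (Fin n)) ∈ S2
  symm := by
    constructor
    intro u v h
    exact ⟨h.1.symm, by rw [Finset.pair_comm]; exact h.2⟩
  loopless := by constructor; intro u h; exact h.1 rfl

/-- A simple graph is chordal if every cycle of length at least four has a chord, i.e. an
edge of the graph joining two non-consecutive vertices of the cycle. -/
def Chordal {α : Type*} (G : SimpleGraph α) : Prop :=
  ∀ (v : α) (w : G.Walk v v), w.IsCycle → 4 ≤ w.length →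
    ∃ u₁ u₂, u₁ ∈ w.support ∧ u₂ ∈ w.support ∧ G.Adj u₁ u₂ ∧ s(u₁, u₂) ∉ w.edges

/-- The triangles of the minimal triangulation of the projective plane, on 6 vertices.
(Vertices are relabelled from `{1,…,6}` to `Fin 6 = {0,…,5}` by `i ↦ i - 1`.) -/
def projPlaneS3 : Finset (Finset (Fin 6)) :=
  {{0,1,3}, {0,1,5}, {0,2,3}, {0,2,4}, {0,4,5}, {1,2,4}, {1,2,5}, {1,3,4}, {2,3,5}, {3,4,5}}

/-!
The six-vertex triangulation of the projective plane has no tetrahedra, and every pair of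
vertices is an edge lying on exactly two triangles. Hence each triangle is a facet of `⟨S_3⟩`,
and every 2-subset of `[6]` lies in two distinct facets, so none is simplicial. A basic linear
sequence of a complex of positive rank starts with a simplicial `V_1` in `Δ_0 = ⟨S_3⟩`, so
`⟨S_3⟩` is not D-perfect.
-/

lemma inc_erase_self {n : ℕ} {F : Finset (Fin n)} {i : Fin n} (hi : i ∈ F) :
    inc (F.erase i) F = (-1) ^ #(F.filter (· ≤ i)) := by
  rw [inc, Finset.sum_eq_single_of_mem i hi fun j _ hji => if_neg fun h =>
    hji ((F.erase_inj hi).mp h).symm, if_pos rfl]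

lemma bvec_ne_zero (𝔽 : Type*) [Field 𝔽] {n k : ℕ} {F : Finset (Fin n)} (hk : 0 < k)
    (hF : #F = k) : bvec 𝔽 n k F ≠ 0 := by
  obtain ⟨i, hi⟩ : F.Nonempty := Finset.card_pos.mp (hF ▸ hk)
  intro h
  have hi' := congrFun h ⟨F.erase i, by rw [Finset.card_erase_of_mem hi, hF]⟩
  simp [bvec, inc_erase_self hi] at hi'

lemma simRank_pos (𝔽 : Type*) [Field 𝔽] {n k : ℕ} {Sk : Finset (Finset (Fin n))}
    {F : Finset (Fin n)} (hk : 0 < k) (hFS : F ∈ Sk) (hF : #F = k) : 0 < simRank 𝔽 n k Sk := by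
  rw [simRank, Module.finrank_pos_iff_exists_ne_zero]
  refine ⟨⟨bvec 𝔽 n k F, Submodule.subset_span ⟨F, hFS, rfl⟩⟩, ?_⟩
  simpa [Subtype.ext_iff] using bvec_ne_zero 𝔽 hk hF

lemma DPerfect.exists_simplicialFace {𝔽 : Type*} [Field 𝔽] {n k : ℕ}
    {Sk : Finset (Finset (Fin n))} (h : DPerfect 𝔽 n k Sk) (hr : 0 < simRank 𝔽 n k Sk) :
    ∃ V : Finset (Fin n), #V = k - 1 ∧ SimplicialFace k Sk V := by
  obtain ⟨V, ⟨-, hcard, -⟩, hsimp⟩ := h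
  exact ⟨V 0, hcard 0 hr, hsimp 0 hr⟩

lemma IsFace.mono {n k : ℕ} {Sk : Finset (Finset (Fin n))} {F G : Finset (Fin n)}
    (hF : IsFace k Sk F) (hGF : G ⊆ F) : IsFace k Sk G := by
  rcases hF with hF | hF
  · exact .inl ((Finset.card_le_card hGF).trans_lt hF)
  · exact .inr fun H hHG => hF H (hHG.trans hGF)

lemma isFacet_of_mem {n k : ℕ} {Sk : Finset (Finset (Fin n))} {T : Finset (Fin n)}
    (hno : ∀ Y : Finset (Fin n), #Y = k + 1 → ¬ IsFace k Sk Y) (hT : T ∈ Sk) (hTk : #T = k) :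
    IsFacet k Sk T := by
  refine ⟨.inr fun G hGT hGk => Finset.eq_of_subset_of_card_le hGT (by omega) ▸ hT, ?_⟩
  intro G hG hTG
  by_contra hne
  have hlt : k < #G := hTk ▸ Finset.card_lt_card (Finset.ssubset_iff_subset_ne.mpr ⟨hTG, hne⟩)
  obtain ⟨Y, hYG, hY⟩ := Finset.exists_subset_card_eq (show k + 1 ≤ #G from hlt)
  exact hno Y hY (hG.mono hYG)

lemma not_simplicialFace_of_two_facets {n k : ℕ} {Sk : Finset (Finset (Fin n))}
    {V T₁ T₂ : Finset (Fin n)} (h₁ : IsFacet k Sk T₁ ∧ V ⊂ T₁) (h₂ : IsFacet k Sk T₂ ∧ V ⊂ T₂)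
    (hne : T₁ ≠ T₂) : ¬ SimplicialFace k Sk V := fun ⟨_, _, huniq⟩ =>
  hne ((huniq T₁ h₁).trans (huniq T₂ h₂).symm)

lemma projPlaneS3_card : ∀ T ∈ projPlaneS3, #T = 3 := by decide

lemma projPlaneS3_not_isFace_card_four :
    ∀ Y : Finset (Fin 6), #Y = 4 → ¬ IsFace 3 projPlaneS3 Y := by
  unfold IsFace
  decide

lemma projPlaneS3_exists_two_triangles : ∀ V : Finset (Fin 6), #V = 2 →
    ∃ T₁ ∈ projPlaneS3, ∃ T₂ ∈ projPlaneS3, T₁ ≠ T₂ ∧ V ⊆ T₁ ∧ V ⊆ T₂ := by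
  decide

lemma projPlaneS3_not_simplicialFace (V : Finset (Fin 6)) (hV : #V = 2) :
    ¬ SimplicialFace 3 projPlaneS3 V := by
  obtain ⟨T₁, h₁, T₂, h₂, hne, hV₁, hV₂⟩ := projPlaneS3_exists_two_triangles V hV
  have facet_over {T} (hT : T ∈ projPlaneS3) (hVT : V ⊆ T) : IsFacet 3 projPlaneS3 T ∧ V ⊂ T :=
    ⟨isFacet_of_mem projPlaneS3_not_isFace_card_four hT (projPlaneS3_card T hT),
      hVT.ssubset_of_ne (ne_of_apply_ne card (by rw [hV, projPlaneS3_card T hT]; omega))⟩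
  exact not_simplicialFace_of_two_facets (facet_over h₁ hV₁) (facet_over h₂ hV₂) hne

theorem stmt18 (𝔽 : Type*) [Field 𝔽] :
    (∀ V : Finset (Fin 6), V.card = 2 → ¬ SimplicialFace 3 projPlaneS3 V) ∧
      ¬ DPerfect 𝔽 6 3 projPlaneS3 := by
  refine ⟨projPlaneS3_not_simplicialFace, fun hD => ?_⟩
  have hr : 0 < simRank 𝔽 6 3 projPlaneS3 :=
    simRank_pos 𝔽 (F := {0, 1, 3}) (by norm_num) (by decide) (by decide)
  obtain ⟨V, hV, hsimp⟩ := hD.exists_simplicialFace hr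
  exact projPlaneS3_not_simplicialFace V hV hsimp
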